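/- arXiv:2508.13609 — 5 statements merged into one kernel-verified Lean document; each statement's English description precedes it below -/
import Mathlib

section
/- Define the discriminant d(T) of a finite list T = [a1, …, an] of integers as the determinant of the n×n tridiagonal matrix with diagonal entries a1, …, an and entries −1 on the sub- and super-diagonal (with d of the empty list equal to 1). Then the lists T with all entries ≥ 2 and d(T) ≤ 5 are exactly: [2]; [3], [2,2]; [4], [2,2,2]; [5], [2,2,2,2], [2,3], [3,2], with discriminants 2; 3, 3; 4, 4; 5, 5, 5, 5 respectively. -/
/-!
Expanding the determinant along the first row gives the continuant recurrence
`d(a :: b :: T) = a * d(b :: T) - d(T)`. When all entries are at least `2`, induction on this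
recurrence shows `d(T) ≥ 1` and `d(a :: T) ≥ d(T) + (a - 1)`, hence
`d(T) > ∑ (aᵢ - 2) + length T`. So `d(T) ≤ 5` forces at most four entries, each small,
and the finitely many remaining chains are checked directly.
-/

/-- The tridiagonal matrix with diagonal entries given by the list `T`
and entries `-1` on the sub- and super-diagonal. -/
def tridiagMatrix (T : List ℤ) : Matrix (Fin T.length) (Fin T.length) ℤ :=
  Matrix.of fun i j =>
    if i = j then T.get i
    else if (i : ℕ) + 1 = (j : ℕ) ∨ (j : ℕ) + 1 = (i : ℕ) then -1 else 0

/-- The discriminant of a chain `T`: the determinant of the associated tridiagonal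
matrix (so the discriminant of the empty list is `1`). -/
def chainDisc (T : List ℤ) : ℤ := (tridiagMatrix T).det

namespace Matrix

variable {R : Type*} [CommRing R] {n : ℕ}

theorem det_succ_column_zero_of_forall_eq_zero (A : Matrix (Fin (n + 1)) (Fin (n + 1)) R)
    (h : ∀ i : Fin n, A i.succ 0 = 0) :
    A.det = A 0 0 * (A.submatrix Fin.succ Fin.succ).det := by
  simp [det_succ_column_zero A, Fin.sum_univ_succ, h]

theorem det_succ_row_zero_of_forall_eq_zero (A : Matrix (Fin (n + 2)) (Fin (n + 2)) R)
    (h : ∀ j : Fin n, A 0 j.succ.succ = 0) :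
    A.det = A 0 0 * (A.submatrix Fin.succ Fin.succ).det -
      A 0 1 * (A.submatrix Fin.succ (Fin.succAbove 1)).det := by
  simp [det_succ_row_zero A, Fin.sum_univ_succ, h, sub_eq_add_neg]

end Matrix

section

variable (a b : ℤ) (T : List ℤ)

@[simp]
theorem tridiagMatrix_cons_zero_zero : tridiagMatrix (a :: T) 0 0 = a := by
  simp [tridiagMatrix]

@[simp]
theorem tridiagMatrix_cons_succ_succ (i j : Fin T.length) :
    tridiagMatrix (a :: T) i.succ j.succ = tridiagMatrix T i j := by
  simp [tridiagMatrix]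

@[simp]
theorem tridiagMatrix_cons_zero_succ (j : Fin T.length) :
    tridiagMatrix (a :: T) 0 j.succ = if (j : ℕ) = 0 then -1 else 0 := by
  simp [tridiagMatrix, eq_comm, Fin.succ_ne_zero]

@[simp]
theorem tridiagMatrix_cons_succ_zero (i : Fin T.length) :
    tridiagMatrix (a :: T) i.succ 0 = if (i : ℕ) = 0 then -1 else 0 := by
  simp [tridiagMatrix, Fin.succ_ne_zero]

@[simp]
theorem tridiagMatrix_cons_cons_zero_one :
    tridiagMatrix (a :: b :: T) 0 1 = -1 :=
  tridiagMatrix_cons_zero_succ a (b :: T) 0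

@[simp]
theorem tridiagMatrix_cons_cons_one_zero :
    tridiagMatrix (a :: b :: T) 1 0 = -1 :=
  tridiagMatrix_cons_succ_zero a (b :: T) 0

theorem tridiagMatrix_cons_submatrix_succ :
    (tridiagMatrix (a :: T)).submatrix Fin.succ Fin.succ = tridiagMatrix T := by
  ext i j
  simp

@[simp]
theorem chainDisc_nil : chainDisc [] = 1 := by
  simp [chainDisc]

@[simp]
theorem chainDisc_singleton : chainDisc [a] = a := by
  simp [chainDisc, tridiagMatrix]

@[simp]
theorem chainDisc_cons_cons :
    chainDisc (a :: b :: T) = a * chainDisc (b :: T) - chainDisc T := by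
  have hminor : ((tridiagMatrix (a :: b :: T)).submatrix Fin.succ (Fin.succAbove 1)).det =
      -chainDisc T := by
    rw [Matrix.det_succ_column_zero_of_forall_eq_zero _ (fun i => by simp)]
    have hshift : ((tridiagMatrix (a :: b :: T)).submatrix Fin.succ (Fin.succAbove 1)).submatrix
        Fin.succ Fin.succ = tridiagMatrix T := by
      ext i j
      simp
    simp [hshift, chainDisc]
  rw [chainDisc, Matrix.det_succ_row_zero_of_forall_eq_zero _ (fun j => by simp), hminor,
    tridiagMatrix_cons_submatrix_succ]
  simp [chainDisc]

end

theorem one_le_chainDisc_and_add_le_chainDisc_cons :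
    ∀ (a : ℤ) (T : List ℤ), (∀ x ∈ a :: T, 2 ≤ x) →
      1 ≤ chainDisc T ∧ chainDisc T + (a - 1) ≤ chainDisc (a :: T)
  | a, [], _ => by simp
  | a, b :: T, h => by
    obtain ⟨hT, hbT⟩ :=
      one_le_chainDisc_and_add_le_chainDisc_cons b T (List.forall_mem_cons.1 h).2
    have ha : 2 ≤ a := h a List.mem_cons_self
    have hb : 2 ≤ b := h b (by simp)
    refine ⟨by omega, ?_⟩
    rw [chainDisc_cons_cons]
    -- a·d(b::T) - d(T) - d(b::T) - (a - 1) = (a - 2)(d(b::T) - 1) + (d(b::T) - d(T) - 1)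
    nlinarith [mul_nonneg (sub_nonneg.2 ha) (show 0 ≤ chainDisc (b :: T) - 1 by omega)]

theorem sum_map_sub_two_add_length_lt_chainDisc :
    ∀ T : List ℤ, (∀ x ∈ T, 2 ≤ x) → (T.map (· - 2)).sum + T.length < chainDisc T
  | [], _ => by simp
  | a :: T, h => by
    have hT := sum_map_sub_two_add_length_lt_chainDisc T (List.forall_mem_cons.1 h).2
    have hstep := (one_le_chainDisc_and_add_le_chainDisc_cons a T h).2
    simp only [List.map_cons, List.sum_cons, List.length_cons]
    push_cast
    omega

theorem mem_of_chainDisc_le_five {T : List ℤ} (hne : T ≠ []) (h2 : ∀ x ∈ T, 2 ≤ x)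
    (h5 : chainDisc T ≤ 5) :
    T ∈ ([[2], [3], [2, 2], [4], [2, 2, 2], [5], [2, 2, 2, 2], [2, 3], [3, 2]] :
      List (List ℤ)) := by
  have hbound := sum_map_sub_two_add_length_lt_chainDisc T h2
  rcases T with _ | ⟨a, _ | ⟨b, _ | ⟨c, _ | ⟨d, T⟩⟩⟩⟩
  · exact absurd rfl hne
  all_goals simp only [List.forall_mem_cons, List.map_cons, List.map_nil, List.sum_cons,
    List.sum_nil, List.length_cons, List.length_nil, Nat.cast_add, Nat.cast_one,
    Nat.cast_zero] at h2 hbound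
  · obtain ⟨ha, -⟩ := h2
    have : a ≤ 5 := by omega
    interval_cases a <;> simp
  · obtain ⟨ha, hb, -⟩ := h2
    obtain ⟨_, _⟩ : a ≤ 4 ∧ b ≤ 4 := by omega
    interval_cases a <;> interval_cases b <;> simp_all
  · obtain ⟨ha, hb, hc, -⟩ := h2
    obtain ⟨_, _, _⟩ : a ≤ 3 ∧ b ≤ 3 ∧ c ≤ 3 := by omega
    interval_cases a <;> interval_cases b <;> interval_cases c <;> simp_all
  · obtain ⟨ha, hb, hc, hd, hT⟩ := h2
    have hsum : 0 ≤ (T.map (· - 2)).sum :=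
      List.sum_nonneg (by simpa using fun x hx => hT x hx)
    obtain ⟨rfl, rfl, rfl, rfl, hlen⟩ : a = 2 ∧ b = 2 ∧ c = 2 ∧ d = 2 ∧ T.length = 0 := by omega
    simp [List.length_eq_zero_iff.1 hlen]

/-- **Admissible chains of discriminant at most 5.**
The nonempty lists of integers `≥ 2` with discriminant `≤ 5` are exactly
`[2]; [3], [2,2]; [4], [2,2,2]; [5], [2,2,2,2], [2,3], [3,2]`, with discriminants
`2; 3, 3; 4, 4; 5, 5, 5, 5` respectively. -/
theorem admissible_chains_of_small_disc :
    (∀ T : List ℤ, T ≠ [] →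
      (((∀ a ∈ T, 2 ≤ a) ∧ chainDisc T ≤ 5) ↔
        T ∈ ([[2], [3], [2, 2], [4], [2, 2, 2], [5], [2, 2, 2, 2], [2, 3], [3, 2]] :
          List (List ℤ)))) ∧
    chainDisc [2] = 2 ∧
    chainDisc [3] = 3 ∧ chainDisc [2, 2] = 3 ∧
    chainDisc [4] = 4 ∧ chainDisc [2, 2, 2] = 4 ∧
    chainDisc [5] = 5 ∧ chainDisc [2, 2, 2, 2] = 5 ∧
    chainDisc [2, 3] = 5 ∧ chainDisc [3, 2] = 5 := by
  refine ⟨fun T hne => ⟨fun ⟨h2, h5⟩ => mem_of_chainDisc_le_five hne h2 h5, fun hmem => ?_⟩,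
    by norm_num⟩
  simp only [List.mem_cons, List.not_mem_nil, or_false] at hmem
  rcases hmem with rfl | rfl | rfl | rfl | rfl | rfl | rfl | rfl | rfl <;> norm_num
end

section
/- Let A = [a1, …, an] and B = [b1, …, bn] be lists of integers of the same length with 2 ≤ a_i ≤ b_i for all i. For a list T with entries ≥ 2, define the log discrepancy ld_j(T) = (d(T_{<j}) + d(T_{>j})) / d(T), where d is the tridiagonal discriminant, T_{<j} is the prefix before position j, and T_{>j} the suffix after position j. Then ld_j(A) ≥ ld_j(B) for every j. -/
/-- The log discrepancy of the `j`-th entry (1-indexed) of the chain `T`: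
`ld_j(T) = (d(T_{<j}) + d(T_{>j})) / d(T)`, where `T_{<j}` is the prefix before
position `j` and `T_{>j}` the suffix after position `j`. -/
def chainLd (T : List ℤ) (j : ℕ) : ℚ :=
  ((chainDisc (T.take (j - 1)) : ℚ) + (chainDisc (T.drop j) : ℚ)) / (chainDisc T : ℚ)

/-! Auxiliary: a recursive description of the discriminant (continuant). -/

def cd : List ℤ → ℤ
  | [] => 1
  | [a] => a
  | a :: b :: T => a * cd (b :: T) - cd T

def cdT : List ℤ → ℤ
  | [] => 0
  | _ :: T => cd T

def cdL : List ℤ → ℤ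
  | [] => 0
  | L@(_ :: _) => cd L.dropLast

lemma cd_cons (a : ℤ) (T : List ℤ) : cd (a :: T) = a * cd T - cdT T := by
  cases T <;> simp [cd, cdT]

lemma cd_cons₂ (a b : ℤ) (T : List ℤ) : cd (a :: b :: T) = a * cd (b :: T) - cd T := by
  rw [cd_cons]; rfl

lemma submatrix_succ (a : ℤ) (T : List ℤ) :
    (tridiagMatrix (a :: T)).submatrix Fin.succ Fin.succ = tridiagMatrix T := by
  ext i j
  simp only [tridiagMatrix, Matrix.submatrix_apply, Matrix.of_apply, Fin.succ_inj,
    Fin.val_succ]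
  by_cases hij : i = j
  · subst hij; simp
  · rw [if_neg hij, if_neg hij]
    split_ifs with h1 h2 h2 <;> first | rfl | omega

lemma chainDisc_cons₂ (a b : ℤ) (T : List ℤ) :
    chainDisc (a :: b :: T) = a * chainDisc (b :: T) - chainDisc T := by
  unfold chainDisc
  rw [show (tridiagMatrix (a::b::T)).det
      = (tridiagMatrix (a::b::T) : Matrix (Fin (T.length+2)) (Fin (T.length+2)) ℤ).det from rfl]
  set M : Matrix (Fin (T.length+2)) (Fin (T.length+2)) ℤ := tridiagMatrix (a::b::T) with hMdef
  rw [Matrix.det_succ_row_zero]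
  rw [Fin.sum_univ_succ, Fin.sum_univ_succ]
  have h00 : M 0 0 = a := by simp [hMdef, tridiagMatrix]
  have h01 : M 0 (0:Fin (T.length+1)).succ = -1 := by
    simp [hMdef, tridiagMatrix, Fin.ext_iff]
  have hrest : ∀ j : Fin T.length, M 0 j.succ.succ = 0 := by
    intro j
    simp only [hMdef, tridiagMatrix, Matrix.of_apply, Fin.ext_iff, Fin.val_succ, Fin.val_zero]
    split_ifs <;> simp_all
  rw [h00, h01]
  simp only [hrest, mul_zero, zero_mul, mul_zero, Finset.sum_const_zero, add_zero]
  have hm0 : (M.submatrix Fin.succ (Fin.succAbove 0)).det = (tridiagMatrix (b::T)).det := by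
    congr 1
    rw [show (Fin.succAbove 0 : Fin (T.length+1) → Fin (T.length+2)) = Fin.succ from
      funext (Fin.zero_succAbove)]
    exact submatrix_succ a (b::T)
  have hm1 : (M.submatrix Fin.succ (Fin.succ (0:Fin (T.length+1))).succAbove).det
      = -(tridiagMatrix T).det := by
    rw [Matrix.det_succ_column_zero]
    have hc0 : (M.submatrix Fin.succ ((Fin.succ (0:Fin (T.length+1))).succAbove)) 0 0 = -1 := by
      simp [hMdef, tridiagMatrix, Fin.succAbove, Fin.ext_iff]
    have hcrest : ∀ i : Fin T.length,
        (M.submatrix Fin.succ ((Fin.succ (0:Fin (T.length+1))).succAbove)) i.succ 0 = 0 := by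
      intro i
      simp only [hMdef, Matrix.submatrix_apply, tridiagMatrix, Matrix.of_apply, Fin.ext_iff,
        Fin.val_succ, Fin.succAbove, Fin.castSucc, Fin.castAdd, Fin.castLE, Fin.val_zero]
      norm_num
    rw [Fin.sum_univ_succ, hc0]
    simp only [hcrest, zero_mul, mul_zero, Finset.sum_const_zero, add_zero]
    have : ((M.submatrix Fin.succ ((Fin.succ (0:Fin (T.length+1))).succAbove)).submatrix
        (Fin.succAbove 0) Fin.succ).det = (tridiagMatrix T).det := by
      congr 1
      rw [Matrix.submatrix_submatrix]
      have hfun : (((Fin.succ (0:Fin (T.length+1))).succAbove :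
          Fin (T.length+1) → Fin (T.length+2)) ∘ Fin.succ) = Fin.succ ∘ Fin.succ := by
        funext k
        simp [Fin.succAbove, Fin.ext_iff]
      have hfun2 : ((Fin.succ : Fin (T.length+1) → Fin (T.length+2)) ∘ Fin.succAbove 0)
          = Fin.succ ∘ Fin.succ := by
        funext k
        simp [Fin.zero_succAbove]
      rw [hfun, hfun2, show M.submatrix (Fin.succ ∘ Fin.succ) (Fin.succ ∘ Fin.succ)
          = (M.submatrix Fin.succ Fin.succ).submatrix Fin.succ Fin.succ from rfl]
      rw [show (M.submatrix Fin.succ Fin.succ : Matrix (Fin (T.length+1)) (Fin (T.length+1)) ℤ)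
          = tridiagMatrix (b::T) from submatrix_succ a (b::T)]
      exact submatrix_succ b T
    rw [this]; norm_num
  rw [hm0, hm1]
  norm_num [Fin.val_succ]
  ring

lemma chainDisc_eq_cd : ∀ T : List ℤ, chainDisc T = cd T
  | [] => by
    haveI : IsEmpty (Fin ([] : List ℤ).length) := inferInstanceAs (IsEmpty (Fin 0))
    rw [chainDisc, Matrix.det_isEmpty]
    rfl
  | [a] => by
    show (tridiagMatrix [a] : Matrix (Fin 1) (Fin 1) ℤ).det = a
    rw [Matrix.det_fin_one]
    simp [tridiagMatrix]
  | a :: b :: T => by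
    rw [chainDisc_cons₂, chainDisc_eq_cd (b :: T), chainDisc_eq_cd T, cd_cons₂]

lemma cdL_cons_cons (a x : ℤ) (L : List ℤ) :
    cdL (a :: x :: L) = a * cdL (x :: L) - cdL L := by
  cases L with
  | nil => simp [cdL, cd]
  | cons y S =>
    show cd (List.dropLast (a :: x :: y :: S))
        = a * cd (List.dropLast (x :: y :: S)) - cd (List.dropLast (y :: S))
    simp only [List.dropLast_cons₂]
    exact cd_cons₂ _ _ _

lemma cd_append : ∀ (L R : List ℤ), cd (L ++ R) = cd L * cd R - cdL L * cdT R
  | [], R => by simp [cd, cdL]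
  | [x], R => by simp [List.cons_append, List.nil_append, cd_cons, cd, cdL]
  | a :: x :: L, R => by
    have h1 := cd_append (x :: L) R
    have h2 := cd_append L R
    have h3 : cd ((a :: x :: L) ++ R) = a * cd ((x :: L) ++ R) - cd (L ++ R) := by
      simp only [List.cons_append]; exact cd_cons₂ _ _ _
    rw [h3, h1, h2, cdL_cons_cons, cd_cons₂]
    ring

lemma cd_reverse : ∀ T : List ℤ, cd T.reverse = cd T ∧ cdL T.reverse = cdT T
  | [] => by simp [cd, cdL, cdT]
  | a :: T => by
    have ih := cd_reverse T
    constructor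
    · rw [List.reverse_cons, cd_append, ih.1, ih.2, cd_cons a T]
      show cd T * cd [a] - cdT T * cdT [a] = _
      simp only [cd, cdT]
      ring
    · rw [List.reverse_cons]
      have : cdL (T.reverse ++ [a]) = cd (T.reverse ++ [a]).dropLast := by
        cases hE : T.reverse ++ [a] with
        | nil => simp at hE
        | cons y S => rw [← hE]; simp [cdL, hE]
      rw [this, List.dropLast_concat, ih.1]
      rfl

lemma cdL_eq_cdT_reverse (T : List ℤ) : cdL T = cdT T.reverse := by
  have := (cd_reverse T.reverse).2
  rwa [List.reverse_reverse] at this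

lemma cd_pos : ∀ T : List ℤ, (∀ a ∈ T, 2 ≤ a) → 0 ≤ cdT T ∧ cdT T < cd T
  | [], _ => by simp [cd, cdT]
  | a :: T, h => by
    have ih := cd_pos T (fun x hx => h x (List.mem_cons_of_mem _ hx))
    have ha : 2 ≤ a := h a List.mem_cons_self
    have h1 : cdT (a :: T) = cd T := rfl
    rw [cd_cons, h1]
    constructor
    · linarith [ih.1, ih.2]
    · nlinarith [ih.1, ih.2]

lemma forall₂_ge2 : ∀ {A B : List ℤ}, List.Forall₂ (fun a b => 2 ≤ a ∧ a ≤ b) A B →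
    (∀ x ∈ A, 2 ≤ x) ∧ (∀ x ∈ B, 2 ≤ x) := by
  intro A B h
  induction h with
  | nil => simp
  | cons hab _ ih =>
    refine ⟨?_, ?_⟩ <;> intro x hx <;> rcases List.mem_cons.1 hx with rfl | hx
    · exact hab.1
    · exact ih.1 x hx
    · linarith [hab.1, hab.2]
    · exact ih.2 x hx

lemma cd_mono : ∀ {A B : List ℤ}, List.Forall₂ (fun a b => 2 ≤ a ∧ a ≤ b) A B →
    cdT B - cdT A ≤ cd B - cd A ∧ 0 ≤ cdT B - cdT A ∧ cd A * cdT B ≤ cd B * cdT A := by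
  intro A B h
  induction h with
  | nil => simp [cd, cdT]
  | @cons a b A B hab hAB ih =>
    obtain ⟨hA2, hB2⟩ := forall₂_ge2 hAB
    obtain ⟨hA0, hA1⟩ := cd_pos A hA2
    obtain ⟨hB0, hB1⟩ := cd_pos B hB2
    obtain ⟨i1, i2, i3⟩ := ih
    have e1 : cdT (a :: A) = cd A := rfl
    have e2 : cdT (b :: B) = cd B := rfl
    rw [cd_cons, cd_cons, e1, e2]
    have ha2 : 2 ≤ a := hab.1
    have hab' : a ≤ b := hab.2
    refine ⟨?_, by linarith, ?_⟩
    · nlinarith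
    · nlinarith [mul_le_mul_of_nonneg_right hab'
        (mul_nonneg (by linarith : (0:ℤ) ≤ cd A) (by linarith : (0:ℤ) ≤ cd B))]

lemma key_ineq (t u p q p' q' P Q P' Q' : ℤ)
    (h2t : 2 ≤ t) (htu : t ≤ u)
    (hp : 1 ≤ p) (hP : p ≤ P) (hq : 1 ≤ q) (hQ : q ≤ Q)
    (hp'0 : 0 ≤ p') (hp' : p' < p) (hP'0 : 0 ≤ P') (hP' : P' < P)
    (hq'0 : 0 ≤ q') (hq' : q' < q) (hQ'0 : 0 ≤ Q') (hQ' : Q' < Q)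
    (crossP : p * P' ≤ P * p') (crossQ : q * Q' ≤ Q * q') :
    p + q ≤ t*p*q - p'*q - p*q' ∧ P + Q ≤ u*P*Q - P'*Q - P*Q' ∧
      (P + Q) * (t*p*q - p'*q - p*q') ≤ (p + q) * (u*P*Q - P'*Q - P*Q') := by
  have hq0 : (0:ℤ) ≤ q := by linarith
  have hp0 : (0:ℤ) ≤ p := by linarith
  have hQ0 : (0:ℤ) ≤ Q := by linarith
  have hP0 : (0:ℤ) ≤ P := by linarith
  have hdA1 : p + q ≤ t*p*q - p'*q - p*q' := by
    nlinarith [mul_le_mul_of_nonneg_right (show p' ≤ p - 1 by linarith) hq0,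
      mul_le_mul_of_nonneg_left (show q' ≤ q - 1 by linarith) hp0,
      mul_nonneg (mul_nonneg (show (0:ℤ) ≤ t - 2 by linarith) hp0) hq0]
  have hdB1 : P + Q ≤ u*P*Q - P'*Q - P*Q' := by
    nlinarith [mul_le_mul_of_nonneg_right (show P' ≤ P - 1 by linarith) hQ0,
      mul_le_mul_of_nonneg_left (show Q' ≤ Q - 1 by linarith) hP0,
      mul_nonneg (mul_nonneg (show (0:ℤ) ≤ u - 2 by linarith) hP0) hQ0]
  refine ⟨hdA1, hdB1, ?_⟩
  have I : (P + Q) * (p * q) ≤ (p + q) * (P * Q) := by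
    nlinarith [mul_nonneg (mul_nonneg hp0 hP0) (show (0:ℤ) ≤ Q - q by linarith),
      mul_nonneg (mul_nonneg hq0 hQ0) (show (0:ℤ) ≤ P - p by linarith)]
  have II : P * Q * (t*p*q - p'*q - p*q') ≤ p * q * (u*P*Q - P'*Q - P*Q') := by
    nlinarith [mul_le_mul_of_nonneg_right htu
        (mul_nonneg (mul_nonneg (mul_nonneg hp0 hP0) hq0) hQ0),
      mul_le_mul_of_nonneg_right crossP (mul_nonneg hq0 hQ0),
      mul_le_mul_of_nonneg_right crossQ (mul_nonneg hp0 hP0)]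
  have hdA0 : (0:ℤ) < t*p*q - p'*q - p*q' := by linarith
  have m1 := mul_le_mul_of_nonneg_right I (le_of_lt hdA0)
  have m2 := mul_le_mul_of_nonneg_left II (show (0:ℤ) ≤ p + q by linarith)
  have hpq : (0:ℤ) < p * q := by positivity
  have m3 : (P + Q) * (t*p*q - p'*q - p*q') * (p * q)
      ≤ (p + q) * (u*P*Q - P'*Q - P*Q') * (p * q) := by nlinarith [m1, m2]
  exact le_of_mul_le_mul_right m3 hpq

/-- **Log discrepancies do not decrease in weighted subgraphs (chain case).** -/
theorem chainLd_antitone (A B : List ℤ)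
    (h : List.Forall₂ (fun a b => 2 ≤ a ∧ a ≤ b) A B) :
    ∀ j, 1 ≤ j → j ≤ A.length → chainLd B j ≤ chainLd A j := by
  intro j hj1 hjn
  obtain ⟨k, rfl⟩ : ∃ k, j = k + 1 := ⟨j - 1, by omega⟩
  have hlen : A.length = B.length := h.length_eq
  have hkA : k < A.length := by omega
  have hkB : k < B.length := by omega
  have hsplitA : A = A.take k ++ A.get ⟨k, hkA⟩ :: A.drop (k+1) := by
    conv_lhs => rw [← List.take_append_drop k A]
    congr 1
    rw [List.drop_eq_getElem_cons hkA]
    rfl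
  have hsplitB : B = B.take k ++ B.get ⟨k, hkB⟩ :: B.drop (k+1) := by
    conv_lhs => rw [← List.take_append_drop k B]
    congr 1
    rw [List.drop_eq_getElem_cons hkB]
    rfl
  have hL : List.Forall₂ (fun a b => 2 ≤ a ∧ a ≤ b) (A.take k) (B.take k) :=
    List.forall₂_take k h
  have hR : List.Forall₂ (fun a b => 2 ≤ a ∧ a ≤ b) (A.drop (k+1)) (B.drop (k+1)) :=
    List.forall₂_drop (k+1) h
  have ht : 2 ≤ A.get ⟨k, hkA⟩ ∧ A.get ⟨k, hkA⟩ ≤ B.get ⟨k, hkB⟩ := h.get hkA hkB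
  obtain ⟨hLA2, hLB2⟩ := forall₂_ge2 hL
  obtain ⟨hRA2, hRB2⟩ := forall₂_ge2 hR
  obtain ⟨hqA'0, hqA'1⟩ := cd_pos _ hRA2
  obtain ⟨hqB'0, hqB'1⟩ := cd_pos _ hRB2
  obtain ⟨hpA'2, hpA'3⟩ := cd_pos _ hLA2
  obtain ⟨hpB'2, hpB'3⟩ := cd_pos _ hLB2
  -- dropLast positivity via reversal
  have hlA := cd_pos (A.take k).reverse (fun x hx => hLA2 x (List.mem_reverse.1 hx))
  have hlB := cd_pos (B.take k).reverse (fun x hx => hLB2 x (List.mem_reverse.1 hx))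
  rw [(cd_reverse _).1, ← cdL_eq_cdT_reverse] at hlA hlB
  obtain ⟨mR1, mR2, mR3⟩ := cd_mono hR
  obtain ⟨mL1, mL2, mL3⟩ := cd_mono hL
  have mLd := (cd_mono (List.rel_reverse hL)).2.2
  rw [(cd_reverse _).1, (cd_reverse _).1, ← cdL_eq_cdT_reverse, ← cdL_eq_cdT_reverse] at mLd
  -- discriminant decompositions
  have hdA : cd A = A.get ⟨k, hkA⟩ * cd (A.take k) * cd (A.drop (k+1))
      - cdL (A.take k) * cd (A.drop (k+1)) - cd (A.take k) * cdT (A.drop (k+1)) := by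
    conv_lhs => rw [hsplitA]
    rw [cd_append, cd_cons]
    show cd (A.take k) * (A.get ⟨k, hkA⟩ * cd (A.drop (k+1)) - cdT (A.drop (k+1)))
        - cdL (A.take k) * cd (A.drop (k+1)) = _
    ring
  have hdB : cd B = B.get ⟨k, hkB⟩ * cd (B.take k) * cd (B.drop (k+1))
      - cdL (B.take k) * cd (B.drop (k+1)) - cd (B.take k) * cdT (B.drop (k+1)) := by
    conv_lhs => rw [hsplitB]
    rw [cd_append, cd_cons]
    show cd (B.take k) * (B.get ⟨k, hkB⟩ * cd (B.drop (k+1)) - cdT (B.drop (k+1)))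
        - cdL (B.take k) * cd (B.drop (k+1)) = _
    ring
  obtain ⟨k1, k2, k3⟩ := key_ineq (A.get ⟨k, hkA⟩) (B.get ⟨k, hkB⟩)
    (cd (A.take k)) (cd (A.drop (k+1))) (cdL (A.take k)) (cdT (A.drop (k+1)))
    (cd (B.take k)) (cd (B.drop (k+1))) (cdL (B.take k)) (cdT (B.drop (k+1)))
    ht.1 ht.2
    (by linarith) (by linarith) (by linarith) (by linarith)
    hlA.1 hlA.2 hlB.1 hlB.2 hqA'0 hqA'1 hqB'0 hqB'1
    mLd mR3
  rw [← hdA] at k1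
  rw [← hdB] at k2
  rw [← hdA, ← hdB] at k3
  have hdA0 : (0:ℤ) < cd A := by linarith
  have hdB0 : (0:ℤ) < cd B := by linarith
  unfold chainLd
  rw [Nat.add_sub_cancel]
  rw [chainDisc_eq_cd, chainDisc_eq_cd, chainDisc_eq_cd, chainDisc_eq_cd,
    chainDisc_eq_cd, chainDisc_eq_cd]
  rw [div_le_div_iff₀ (by exact_mod_cast hdB0) (by exact_mod_cast hdA0)]
  exact_mod_cast k3
end

section
/- Let b be an integer and T1, T2, T3 nonempty lists of integers with tridiagonal discriminants d1, d2, d3; let di′ be the discriminant of Ti with its last entry removed. Consider the tree obtained from a central vertex of weight b by attaching the three chains T1, T2, T3, each via its last entry. Then the tridiagonal-type determinant of this tree (determinant of the matrix with the weights on the diagonal and −1 in entries corresponding to adjacent vertices) equals b·d1·d2·d3 − (d1′·d2·d3 + d1·d2′·d3 + d1·d2·d3′). -/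
/-- Index type for the fork: a central vertex together with the vertices of three
chains. -/
abbrev ForkIdx (T1 T2 T3 : List ℤ) :=
  Unit ⊕ Fin T1.length ⊕ Fin T2.length ⊕ Fin T3.length

/-- Entries of the intersection-type matrix of the fork obtained from a central vertex
of weight `b` by attaching the three chains `T1, T2, T3`, each via its last entry:
the weights on the diagonal and `−1` in entries corresponding to adjacent vertices. -/
def forkEntry (b : ℤ) (T1 T2 T3 : List ℤ) :
    ForkIdx T1 T2 T3 → ForkIdx T1 T2 T3 → ℤ
  | Sum.inl _, Sum.inl _ => b
  | Sum.inl _, Sum.inr (Sum.inl j) => if (j : ℕ) + 1 = T1.length then -1 else 0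
  | Sum.inl _, Sum.inr (Sum.inr (Sum.inl j)) => if (j : ℕ) + 1 = T2.length then -1 else 0
  | Sum.inl _, Sum.inr (Sum.inr (Sum.inr j)) => if (j : ℕ) + 1 = T3.length then -1 else 0
  | Sum.inr (Sum.inl j), Sum.inl _ => if (j : ℕ) + 1 = T1.length then -1 else 0
  | Sum.inr (Sum.inr (Sum.inl j)), Sum.inl _ => if (j : ℕ) + 1 = T2.length then -1 else 0
  | Sum.inr (Sum.inr (Sum.inr j)), Sum.inl _ => if (j : ℕ) + 1 = T3.length then -1 else 0
  | Sum.inr (Sum.inl j), Sum.inr (Sum.inl k) =>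
      if j = k then T1.get j
      else if (j : ℕ) + 1 = (k : ℕ) ∨ (k : ℕ) + 1 = (j : ℕ) then -1 else 0
  | Sum.inr (Sum.inr (Sum.inl j)), Sum.inr (Sum.inr (Sum.inl k)) =>
      if j = k then T2.get j
      else if (j : ℕ) + 1 = (k : ℕ) ∨ (k : ℕ) + 1 = (j : ℕ) then -1 else 0
  | Sum.inr (Sum.inr (Sum.inr j)), Sum.inr (Sum.inr (Sum.inr k)) =>
      if j = k then T3.get j
      else if (j : ℕ) + 1 = (k : ℕ) ∨ (k : ℕ) + 1 = (j : ℕ) then -1 else 0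
  | _, _ => 0

/-!
Joining two blocks `A` and `B` by a single edge `p — q` with entries `c`, `c'` gives the
determinant `det A · det B − c c' · m_A(p) · m_B(q)`, where `m_A(p) = adjugate A p p` is the
principal minor of `A` with row and column `p` deleted. The fork is built from its central vertex
by attaching the three chains one edge at a time. The minor of a chain at its last vertex is the
discriminant of the chain with its last entry dropped, and the minor of the partial fork at the
centre is the product of the discriminants of the chains attached so far.
-/

namespace Matrix

variable {R α β : Type*} [CommRing R] [Fintype α] [DecidableEq α] [Fintype β] [DecidableEq β]

theorem det_fromBlocks_single (A : Matrix α α R) (B : Matrix β β R) (p : α) (q : β) (c c' : R) :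
    (fromBlocks A (single p q c) (single q p c') B).det =
      A.det * B.det - c * c' * adjugate A p p * adjugate B q q := by
  set M := fromBlocks A (single p q c) (single q p c') B
  have hrow : M (.inr q) = Sum.elim (0 : α → R) (B q) + c' • Pi.single (.inl p) 1 := by
    ext (y | y) <;> simp [M, single_apply, Pi.single_apply, eq_comm]
  have hcut : M.updateRow (.inr q) (Sum.elim (0 : α → R) (B q)) =
      fromBlocks A (single p q c) 0 B := by
    ext (x | x) (y | y) <;> simp [M, updateRow_apply, single_apply] <;> grind
  -- once row `q` is `e_p`, swapping rows `p` and `q` makes the matrix block triangular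
  have hswap : (M.updateRow (.inr q) (Pi.single (.inl p) 1)).submatrix
      (Equiv.swap (.inl p) (.inr q)) id =
        fromBlocks (A.updateRow p (Pi.single p 1)) 0 ((0 : Matrix β α R).updateRow q (A p))
          (B.updateRow q (c • Pi.single q 1)) := by
    ext (x | x) (y | y) <;>
      simp only [M, submatrix_apply, updateRow_apply, Equiv.swap_apply_def, id] <;>
      split_ifs <;> simp_all [single_apply, Pi.single_apply, eq_comm]
  have hN := det_permute (Equiv.swap (Sum.inl p : α ⊕ β) (.inr q))
    (M.updateRow (.inr q) (Pi.single (.inl p) 1))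
  rw [hswap, det_fromBlocks_zero₁₂, Equiv.Perm.sign_swap (by simp), det_updateRow_smul,
    ← adjugate_apply, ← adjugate_apply] at hN
  rw [← updateRow_eq_self M (.inr q), hrow, det_updateRow_add, hcut, det_fromBlocks_zero₂₁,
    det_updateRow_smul]
  push_cast at hN
  linear_combination c' * hN

theorem adjugate_fromBlocks_single_inl_self (A : Matrix α α R) (B : Matrix β β R) (p : α) (q : β)
    (c c' : R) :
    adjugate (fromBlocks A (single p q c) (single q p c') B) (.inl p) (.inl p) =
      adjugate A p p * B.det := by
  have : (fromBlocks A (single p q c) (single q p c') B).updateRow (.inl p)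
      (Pi.single (.inl p) 1) = fromBlocks (A.updateRow p (Pi.single p 1)) 0 (single q p c') B := by
    ext (x | x) (y | y) <;> simp [updateRow_apply, single_apply, Pi.single_apply]
    grind
  rw [adjugate_apply, this, det_fromBlocks_zero₁₂, adjugate_apply]

end Matrix

open Matrix

theorem List.exists_fin_succ_eq_length {α : Type*} {T : List α} (hT : T ≠ []) :
    ∃ l : Fin T.length, (l : ℕ) + 1 = T.length := by
  have hpos : 0 < T.length := List.length_pos_iff.mpr hT
  exact ⟨⟨T.length - 1, by omega⟩, by simp; omega⟩

theorem adjugate_tridiagMatrix_of_succ_eq_length (T : List ℤ) (l : Fin T.length)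
    (hl : (l : ℕ) + 1 = T.length) :
    adjugate (tridiagMatrix T) l l = chainDisc T.dropLast := by
  have hn : T.dropLast.length + 1 = T.length := by simp; omega
  set e : Fin (T.dropLast.length + 1) ≃ Fin T.length := finCongr hn
  have hl' : e (Fin.last _) = l := Fin.ext (by simp [e]; omega)
  have hminor : ((tridiagMatrix T).submatrix e e).submatrix Fin.castSucc Fin.castSucc =
      tridiagMatrix T.dropLast := by
    ext i j
    simp [tridiagMatrix, e, Fin.ext_iff, List.getElem_dropLast]
  rw [← hl', ← submatrix_apply (adjugate _) e e, ← adjugate_submatrix_equiv_self,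
    adjugate_fin_succ_eq_det_submatrix, Fin.succAbove_last, hminor, chainDisc]
  simp

theorem of_forkEntry_eq_submatrix (b : ℤ) (T1 T2 T3 : List ℤ) (l1 : Fin T1.length)
    (l2 : Fin T2.length) (l3 : Fin T3.length) (hl1 : (l1 : ℕ) + 1 = T1.length)
    (hl2 : (l2 : ℕ) + 1 = T2.length) (hl3 : (l3 : ℕ) + 1 = T3.length) :
    Matrix.of (forkEntry b T1 T2 T3) =
      (fromBlocks
        (fromBlocks
          (fromBlocks (of fun _ _ => b) (single () l1 (-1)) (single l1 () (-1)) (tridiagMatrix T1))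
          (single (.inl ()) l2 (-1)) (single l2 (.inl ()) (-1)) (tridiagMatrix T2))
        (single (.inl (.inl ())) l3 (-1)) (single l3 (.inl (.inl ())) (-1))
        (tridiagMatrix T3)).submatrix
        ((Equiv.sumAssoc _ _ _).symm.trans (Equiv.sumAssoc _ _ _).symm)
        ((Equiv.sumAssoc _ _ _).symm.trans (Equiv.sumAssoc _ _ _).symm) := by
  ext (_ | x | x | x) (_ | y | y | y) <;>
    simp [forkEntry, tridiagMatrix, single_apply, Fin.ext_iff] <;> omega

/-- **Discriminant of a fork.**
For an integer `b` and nonempty lists `T1, T2, T3` of integers with discriminants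
`d1, d2, d3` (and `di′` the discriminant of `Ti` minus its last entry), the determinant
of the tridiagonal-type matrix of the fork equals
`b·d1·d2·d3 − (d1′·d2·d3 + d1·d2′·d3 + d1·d2·d3′)`. -/
theorem fork_det (b : ℤ) (T1 T2 T3 : List ℤ)
    (h1 : T1 ≠ []) (h2 : T2 ≠ []) (h3 : T3 ≠ []) :
    (Matrix.of (forkEntry b T1 T2 T3)).det =
      b * chainDisc T1 * chainDisc T2 * chainDisc T3 -
        (chainDisc T1.dropLast * chainDisc T2 * chainDisc T3 +
          chainDisc T1 * chainDisc T2.dropLast * chainDisc T3 +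
          chainDisc T1 * chainDisc T2 * chainDisc T3.dropLast) := by
  obtain ⟨l1, hl1⟩ := List.exists_fin_succ_eq_length h1
  obtain ⟨l2, hl2⟩ := List.exists_fin_succ_eq_length h2
  obtain ⟨l3, hl3⟩ := List.exists_fin_succ_eq_length h3
  rw [of_forkEntry_eq_submatrix b T1 T2 T3 l1 l2 l3 hl1 hl2 hl3, det_submatrix_equiv_self,
    det_fromBlocks_single, det_fromBlocks_single, det_fromBlocks_single,
    adjugate_fromBlocks_single_inl_self, adjugate_fromBlocks_single_inl_self,
    adjugate_fromBlocks_single_inl_self, adjugate_tridiagMatrix_of_succ_eq_length T1 l1 hl1,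
    adjugate_tridiagMatrix_of_succ_eq_length T2 l2 hl2,
    adjugate_tridiagMatrix_of_succ_eq_length T3 l3 hl3,
    det_unique, adjugate_subsingleton, one_apply_eq]
  simp only [chainDisc, of_apply]
  ring
end

section
/- Let M1 be the 10×11 integer matrix with rows: (1,0,0,1,0,0,0,0,0,0,0), (1,0,0,0,0,1,0,0,0,0,0), (1,0,0,0,0,0,1,1,0,0,0), (0,1,1,0,0,0,0,0,0,0,0), (0,1,0,0,1,0,0,0,0,0,0), (0,1,0,0,0,0,1,0,0,0,1), (0,0,1,0,0,0,0,−2,0,0,0), (0,0,0,1,0,0,0,0,−2,1,0), (0,0,0,0,1,0,0,0,1,−3,0), (0,0,0,0,0,1,0,0,0,0,−2). Then the cokernel of the ℤ-linear map ℤ^11 → ℤ^10 defined by M1 is a finite group of order 3 (isomorphic to ℤ/3ℤ). -/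
/-
The functional `c : x ↦ -x₁ + x₂ + x₃ - x₅ - x₆ + x₉ (mod 3)` (rows indexed from `0`) kills
every column of `M1`, so it factors through the cokernel. Conversely an explicit integer matrix `S`
with `M1 * S = 1 - e₂ cᵀ`, together with a preimage of `3 e₂`, writes every vector of its kernel
as an image of `M1`. Since `c(e₂) = 1`, the cokernel is `ℤ¹⁰ / ker c ≅ ℤ/3ℤ`.
-/

/-- The matrix of the restriction map `H²(X₁) → H²(D₁)` for the minimal log
resolution of the first del Pezzo surface of singularity type `[2,2,3,(2)₅] + [3,2]`. -/
def M1 : Matrix (Fin 10) (Fin 11) ℤ :=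
  !![1, 0, 0, 1, 0, 0, 0, 0, 0, 0, 0;
     1, 0, 0, 0, 0, 1, 0, 0, 0, 0, 0;
     1, 0, 0, 0, 0, 0, 1, 1, 0, 0, 0;
     0, 1, 1, 0, 0, 0, 0, 0, 0, 0, 0;
     0, 1, 0, 0, 1, 0, 0, 0, 0, 0, 0;
     0, 1, 0, 0, 0, 0, 1, 0, 0, 0, 1;
     0, 0, 1, 0, 0, 0, 0, -2, 0, 0, 0;
     0, 0, 0, 1, 0, 0, 0, 0, -2, 1, 0;
     0, 0, 0, 0, 1, 0, 0, 0, 1, -3, 0;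
     0, 0, 0, 0, 0, 1, 0, 0, 0, 0, -2]

open Matrix

section CokernelCertificate

variable {m n : Type*} [Fintype m] [Fintype n] (p : ℕ) (c : m → ℤ)

def dotProductMod : (m → ℤ) →ₗ[ℤ] ZMod p :=
  Fintype.linearCombination ℤ fun i => (c i : ZMod p)

theorem dotProductMod_apply (x : m → ℤ) : dotProductMod p c x = ((c ⬝ᵥ x : ℤ) : ZMod p) := by
  simp only [dotProductMod, Fintype.linearCombination_apply, dotProduct, zsmul_eq_mul]
  push_cast
  exact Finset.sum_congr rfl fun i _ => mul_comm _ _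

theorem dotProductMod_surjective {v : m → ℤ} (hv : c ⬝ᵥ v = 1) :
    Function.Surjective (dotProductMod p c) := by
  intro y
  obtain ⟨k, rfl⟩ := ZMod.intCast_surjective y
  refine ⟨k • v, ?_⟩
  rw [map_zsmul, dotProductMod_apply, hv, Int.cast_one, zsmul_one]

variable {p c}

/-- If `c ⬝ᵥ x = p * k`, then `A *ᵥ (S *ᵥ x + k • w) = x - (c ⬝ᵥ x) • v + (k * p) • v = x`. -/
theorem exact_mulVecLin_dotProductMod [DecidableEq m] {A : Matrix m n ℤ} {u : n → ℤ} {v : m → ℤ}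
    {S : Matrix n m ℤ} {w : n → ℤ} (hc : c ᵥ* A = (p : ℤ) • u) (hS : A * S = 1 - vecMulVec v c)
    (hw : A *ᵥ w = (p : ℤ) • v) :
    Function.Exact A.mulVecLin (dotProductMod p c) := by
  intro x
  rw [Set.mem_range, dotProductMod_apply, ZMod.intCast_zmod_eq_zero_iff_dvd]
  constructor
  · rintro ⟨k, hk⟩
    refine ⟨S *ᵥ x + k • w, ?_⟩
    rw [mulVecLin_apply, mulVec_add, mulVec_mulVec, hS, sub_mulVec, one_mulVec,
      vecMulVec_mulVec, hk, mulVec_smul, hw, op_smul_eq_smul, smul_smul, mul_comm]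
    abel
  · rintro ⟨y, rfl⟩
    rw [mulVecLin_apply, dotProduct_mulVec, hc, smul_dotProduct, smul_eq_mul]
    exact dvd_mul_right _ _

noncomputable def cokernelEquivZMod [DecidableEq m] {A : Matrix m n ℤ} {u : n → ℤ} {v : m → ℤ}
    {S : Matrix n m ℤ} {w : n → ℤ} (hc : c ᵥ* A = (p : ℤ) • u) (hv : c ⬝ᵥ v = 1)
    (hS : A * S = 1 - vecMulVec v c) (hw : A *ᵥ w = (p : ℤ) • v) :
    ((m → ℤ) ⧸ LinearMap.range A.mulVecLin) ≃ₗ[ℤ] ZMod p :=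
  (exact_mulVecLin_dotProductMod hc hS hw).linearEquivOfSurjective
    (dotProductMod_surjective p c hv)

end CokernelCertificate

def M1Functional : Fin 10 → ℤ := ![0, -1, 1, 1, 0, -1, -1, 0, 0, 1]

/-- Column `j` is a preimage under `M1` of `eⱼ - cⱼ e₂`, where `c = M1Functional`. -/
def M1Section : Matrix (Fin 11) (Fin 10) ℤ :=
  !![ 2, -1, 0, -4,  4, 0,  4, -2, -4,  1;
      2, -2, 0, -3,  4, 0,  3, -2, -4,  2;
     -2,  2, 0,  4, -4, 0, -3,  2,  4, -2;
     -1,  1, 0,  4, -4, 0, -4,  2,  4, -1;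
     -2,  2, 0,  3, -3, 0, -3,  2,  4, -2;
     -2,  2, 0,  4, -4, 0, -4,  2,  4, -1;
     -1,  1, 0,  1, -2, 1, -1,  1,  2, -1;
     -1,  1, 0,  2, -2, 0, -2,  1,  2, -1;
     -1,  1, 0,  3, -3, 0, -3,  1,  3, -1;
     -1,  1, 0,  2, -2, 0, -2,  1,  2, -1;
     -1,  1, 0,  2, -2, 0, -2,  1,  2, -1]

theorem M1Functional_vecMul :
    M1Functional ᵥ* M1 = (3 : ℤ) • (![0, 0, 0, 0, 0, 0, 0, 1, 0, 0, -1] : Fin 11 → ℤ) := by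
  decide

theorem M1_mul_M1Section :
    M1 * M1Section = 1 - vecMulVec (Pi.single 2 1 : Fin 10 → ℤ) M1Functional := by
  decide

theorem M1_mulVec_eq_three_smul :
    M1 *ᵥ ![-2, -4, 4, 2, 4, 2, 3, 2, 2, 2, 1] = (3 : ℤ) • (Pi.single 2 1 : Fin 10 → ℤ) := by
  decide

/-- **The cokernel of `M1` has order `3`.**
The cokernel of the `ℤ`-linear map `ℤ¹¹ → ℤ¹⁰` defined by `M1` is a finite group of
order `3`, isomorphic to `ℤ/3ℤ`. -/
theorem coker_M1_order_three :
    Nat.card ((Fin 10 → ℤ) ⧸ LinearMap.range (Matrix.mulVecLin M1)) = 3 ∧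
    Nonempty (((Fin 10 → ℤ) ⧸ LinearMap.range (Matrix.mulVecLin M1)) ≃+ ZMod 3) := by
  have e := cokernelEquivZMod (p := 3) M1Functional_vecMul (by decide) M1_mul_M1Section
    M1_mulVec_eq_three_smul
  exact ⟨by rw [Nat.card_congr e.toEquiv, Nat.card_zmod], ⟨e.toAddEquiv⟩⟩
end

section
/- Let M2 be the 10×11 integer matrix with rows: (1,0,0,1,0,0,0,0,0,0,0), (1,0,0,0,0,1,0,0,0,0,0), (1,0,0,0,1,0,1,1,0,0,0), (0,1,1,0,0,0,0,0,0,0,0), (0,1,0,0,1,0,0,0,0,0,0), (0,1,0,0,0,0,1,0,0,0,1), (0,0,1,0,0,0,0,−2,0,0,0), (0,0,0,1,0,0,0,0,−2,0,0), (0,0,0,0,0,1,0,0,0,−2,1), (0,0,0,0,0,0,0,0,0,1,−2). Then the ℤ-linear map ℤ^11 → ℤ^10 defined by M2 is surjective; equivalently, its cokernel is trivial. -/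
/-- The matrix of the restriction map `H²(X₂) → H²(D₂)` for the minimal log
resolution of the second del Pezzo surface of singularity type `[2,2,3,(2)₅] + [3,2]`. -/
def M2 : Matrix (Fin 10) (Fin 11) ℤ :=
  !![1, 0, 0, 1, 0, 0, 0, 0, 0, 0, 0;
     1, 0, 0, 0, 0, 1, 0, 0, 0, 0, 0;
     1, 0, 0, 0, 1, 0, 1, 1, 0, 0, 0;
     0, 1, 1, 0, 0, 0, 0, 0, 0, 0, 0;
     0, 1, 0, 0, 1, 0, 0, 0, 0, 0, 0;
     0, 1, 0, 0, 0, 0, 1, 0, 0, 0, 1;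
     0, 0, 1, 0, 0, 0, 0, -2, 0, 0, 0;
     0, 0, 0, 1, 0, 0, 0, 0, -2, 0, 0;
     0, 0, 0, 0, 0, 1, 0, 0, 0, -2, 1;
     0, 0, 0, 0, 0, 0, 0, 0, 0, 1, -2]

def N2 : Matrix (Fin 11) (Fin 10) ℤ :=
  !![-15, 4, 12, 24, -12, -12, -24, 15, -4, -8;
     -8, 2, 6, 13, -6, -6, -13, 8, -2, -4;
     8, -2, -6, -12, 6, 6, 13, -8, 2, 4;
     16, -4, -12, -24, 12, 12, 24, -15, 4, 8;
     8, -2, -6, -13, 7, 6, 13, -8, 2, 4;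
     15, -3, -12, -24, 12, 12, 24, -15, 4, 8;
     3, -1, -2, -5, 2, 3, 5, -3, 1, 2;
     4, -1, -3, -6, 3, 3, 6, -4, 1, 2;
     8, -2, -6, -12, 6, 6, 12, -8, 2, 4;
     10, -2, -8, -16, 8, 8, 16, -10, 2, 5;
     5, -1, -4, -8, 4, 4, 8, -5, 1, 2]

theorem M2_mul_N2 : M2 * N2 = 1 := by
  decide

theorem LinearMap.subsingleton_quotient_range_of_surjective {R M N : Type*} [Ring R]
    [AddCommMonoid M] [AddCommGroup N] [Module R M] [Module R N] {f : M →ₗ[R] N}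
    (hf : Function.Surjective f) : Subsingleton (N ⧸ LinearMap.range f) :=
  Submodule.Quotient.subsingleton_iff.2 (LinearMap.range_eq_top_of_surjective f hf)

/-- **The map defined by `M2` is surjective; equivalently, its cokernel is trivial.** -/
theorem M2_surjective :
    Function.Surjective (Matrix.mulVecLin M2) ∧
    Subsingleton ((Fin 10 → ℤ) ⧸ LinearMap.range (Matrix.mulVecLin M2)) := by
  have hM2 : Function.Surjective (Matrix.mulVecLin M2) :=
    Matrix.mulVec_surjective_iff_exists_right_inverse.2 ⟨N2, M2_mul_N2⟩
  exact ⟨hM2, LinearMap.subsingleton_quotient_range_of_surjective hM2⟩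
end
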